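/- Let i ∈ Z/7Z, let L = [i,i+4]_R be a long single red diagonal of the heptagon Π, and let T be a cluster configuration containing L. If i ≠ 1, then exactly one of the two diagonals [i,i+5]_R and [i+6,i+4]_R (the red single diagonals triangulating the quadrilateral Π_4 cut off by L) belongs to T; if i = 1, then exactly one of [1,6]_R and [5,7]_B = ρ([7,5]_R) belongs to T. In each case the two listed diagonals are complements of each other. The analogous statement holds for blue long single diagonals ρ(L) = [i+4,i]_B. -/

import Mathlib

/-!
The combinatorial model of the cluster category `C_{E₆}` by coloured oriented
single and paired diagonals of a regular heptagon, following L. Lamberti,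
"Combinatorial model for the cluster categories of type E", Section 5.

The vertices of the heptagon `Π` are labelled by `ZMod 7` (clockwise; the
label `7` is the same as `0`).  `Π_{1,2,2}` consists of the 42 diagonals
`[i,i+2]_P, [i,i+3]_P, [i,i+4]_R, [i,i+5]_R, [i+4,i]_B, [i+5,i]_B`.
-/

inductive Colour : Type
  | R : Colour
  | B : Colour
  | P : Colour
deriving DecidableEq

/-- A coloured oriented (single or paired) diagonal `[i,j]_c` of the regular
heptagon. -/
structure Dg where
  i : ZMod 7
  j : ZMod 7
  c : Colour
deriving DecidableEq

/-- Abbreviation for entering diagonals by natural-number labels. -/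
def dg (a b : ℕ) (c : Colour) : Dg := ⟨(a : ZMod 7), (b : ZMod 7), c⟩

/-- `ρ`: simultaneous change of colour and orientation. -/
def rho : Dg → Dg
  | ⟨i, j, Colour.R⟩ => ⟨j, i, Colour.B⟩
  | ⟨i, j, Colour.B⟩ => ⟨j, i, Colour.R⟩
  | ⟨i, j, Colour.P⟩ => ⟨i, j, Colour.P⟩

/-- The rotation `[i,j]_c ↦ [i-1,j-1]_c`. -/
def shiftD (d : Dg) : Dg := ⟨d.i - 1, d.j - 1, d.c⟩

/-- The 42 coloured oriented single and paired diagonals `Π_{1,2,2}` of the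
heptagon. -/
def InPi (d : Dg) : Prop :=
  ∃ i : ZMod 7, d = ⟨i, i + 2, Colour.P⟩ ∨ d = ⟨i, i + 3, Colour.P⟩ ∨
    d = ⟨i, i + 4, Colour.R⟩ ∨ d = ⟨i, i + 5, Colour.R⟩ ∨
    d = ⟨i + 4, i, Colour.B⟩ ∨ d = ⟨i + 5, i, Colour.B⟩

/-- The first slice `Π_{1,2,2}|_1` of the quiver `Γ := Γ^7_{1,2,2}`. -/
def firstSlice : List Dg :=
  [dg 1 3 Colour.P, dg 1 4 Colour.P, dg 1 5 Colour.R, dg 1 6 Colour.R,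
   dg 5 1 Colour.B, dg 6 1 Colour.B]

/-- The translation `τ` of `Γ^7_{1,2,2}`: the rotation `[i,j]_c ↦ [i-1,j-1]_c`
composed with the colour-orientation swap `ρ` on the first slice. -/
def tau7 (d : Dg) : Dg :=
  if d ∈ firstSlice then rho (shiftD d) else shiftD d

/-- The translation applied to a whole collection of diagonals. -/
def tauT (T : Finset Dg) : Finset Dg := T.image tau7

/-- The curves of `(1, 3, 'P')`. -/
def c13 : List (List Dg) :=
  [  [dg 2 4 Colour.P,
   dg 2 5 Colour.P,
   dg 2 6 Colour.R,
   dg 6 2 Colour.B,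
   dg 2 7 Colour.R,
   dg 7 2 Colour.B,
   dg 3 7 Colour.R,
   dg 7 3 Colour.B,
   dg 4 7 Colour.P,
   dg 5 7 Colour.P,
   dg 5 1 Colour.P],
  [dg 7 2 Colour.P,
   dg 6 2 Colour.P,
   dg 5 2 Colour.R,
   dg 2 5 Colour.B,
   dg 4 2 Colour.R,
   dg 2 4 Colour.B,
   dg 4 1 Colour.R,
   dg 1 4 Colour.B,
   dg 4 7 Colour.P,
   dg 4 6 Colour.P,
   dg 3 6 Colour.P]]

/-- The curves of `(1, 4, 'P')`. -/
def c14 : List (List Dg) :=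
  [  [dg 2 5 Colour.P,
   dg 2 6 Colour.R,
   dg 6 2 Colour.B,
   dg 2 7 Colour.R,
   dg 7 2 Colour.B,
   dg 3 7 Colour.R,
   dg 7 3 Colour.B,
   dg 4 7 Colour.P,
   dg 5 7 Colour.P,
   dg 5 1 Colour.P],
  [dg 3 5 Colour.P,
   dg 3 6 Colour.P,
   dg 3 7 Colour.R,
   dg 7 3 Colour.B,
   dg 3 1 Colour.R,
   dg 1 3 Colour.B,
   dg 4 1 Colour.R,
   dg 1 4 Colour.B,
   dg 5 1 Colour.P,
   dg 6 1 Colour.P,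
   dg 6 2 Colour.P],
  [dg 7 3 Colour.P,
   dg 7 2 Colour.P,
   dg 6 2 Colour.P,
   dg 5 2 Colour.R,
   dg 2 5 Colour.B,
   dg 4 2 Colour.R,
   dg 2 4 Colour.B,
   dg 4 1 Colour.R,
   dg 1 4 Colour.B,
   dg 4 7 Colour.P],
  [dg 3 6 Colour.P,
   dg 4 6 Colour.P,
   dg 4 7 Colour.P,
   dg 5 7 Colour.P,
   dg 5 1 Colour.P,
   dg 5 2 Colour.R,
   dg 5 3 Colour.R,
   dg 2 5 Colour.B,
   dg 3 5 Colour.B,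
   dg 6 3 Colour.R,
   dg 3 6 Colour.B]]

/-- The curves of `(1, 5, 'R')`. -/
def c15 : List (List Dg) :=
  [  [dg 2 6 Colour.R,
   dg 3 6 Colour.P,
   dg 4 6 Colour.P,
   dg 4 7 Colour.P,
   dg 4 1 Colour.R,
   dg 4 2 Colour.R,
   dg 5 2 Colour.R],
  [dg 2 7 Colour.R,
   dg 3 7 Colour.R,
   dg 4 7 Colour.P,
   dg 5 7 Colour.P,
   dg 5 1 Colour.P,
   dg 5 2 Colour.R,
   dg 5 3 Colour.R,
   dg 6 3 Colour.R],
  [dg 4 7 Colour.B,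
   dg 7 3 Colour.P,
   dg 7 2 Colour.P,
   dg 6 2 Colour.P,
   dg 2 5 Colour.B,
   dg 2 4 Colour.B,
   dg 1 4 Colour.B],
  [dg 7 3 Colour.B,
   dg 1 3 Colour.B,
   dg 1 4 Colour.B,
   dg 5 1 Colour.P,
   dg 6 1 Colour.P,
   dg 6 2 Colour.P,
   dg 3 6 Colour.B,
   dg 4 6 Colour.B]]

/-- The curves of `(1, 6, 'R')`. -/
def c16 : List (List Dg) :=
  [  [dg 2 7 Colour.R,
   dg 3 7 Colour.R,
   dg 4 7 Colour.P,
   dg 5 7 Colour.P,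
   dg 5 1 Colour.P,
   dg 5 2 Colour.R,
   dg 5 3 Colour.R,
   dg 6 3 Colour.R],
  [dg 5 7 Colour.B,
   dg 4 7 Colour.B,
   dg 7 3 Colour.P,
   dg 7 2 Colour.P,
   dg 6 2 Colour.P,
   dg 2 5 Colour.B,
   dg 2 4 Colour.B,
   dg 1 4 Colour.B]]

/-- The curves of `(5, 1, 'B')`. -/
def c51 : List (List Dg) :=
  [  [dg 6 2 Colour.B,
   dg 3 6 Colour.P,
   dg 4 6 Colour.P,
   dg 4 7 Colour.P,
   dg 1 4 Colour.B,
   dg 2 4 Colour.B,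
   dg 2 5 Colour.B],
  [dg 7 2 Colour.B,
   dg 7 3 Colour.B,
   dg 4 7 Colour.P,
   dg 5 7 Colour.P,
   dg 5 1 Colour.P,
   dg 2 5 Colour.B,
   dg 3 5 Colour.B,
   dg 3 6 Colour.B],
  [dg 7 4 Colour.R,
   dg 7 3 Colour.P,
   dg 7 2 Colour.P,
   dg 6 2 Colour.P,
   dg 5 2 Colour.R,
   dg 4 2 Colour.R,
   dg 4 1 Colour.R],
  [dg 3 7 Colour.R,
   dg 3 1 Colour.R,
   dg 4 1 Colour.R,
   dg 5 1 Colour.P,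
   dg 6 1 Colour.P,
   dg 6 2 Colour.P,
   dg 6 3 Colour.R,
   dg 6 4 Colour.R]]

/-- The curves of `(6, 1, 'B')`. -/
def c61 : List (List Dg) :=
  [  [dg 7 2 Colour.B,
   dg 7 3 Colour.B,
   dg 4 7 Colour.P,
   dg 5 7 Colour.P,
   dg 5 1 Colour.P,
   dg 2 5 Colour.B,
   dg 3 5 Colour.B,
   dg 3 6 Colour.B],
  [dg 7 5 Colour.R,
   dg 7 4 Colour.R,
   dg 7 3 Colour.P,
   dg 7 2 Colour.P,
   dg 6 2 Colour.P,
   dg 5 2 Colour.R,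
   dg 4 2 Colour.R,
   dg 4 1 Colour.R]]

/-- The curves `C₁(D), …, C_r(D)` (`r ∈ {2,4}`) attached to each vertex `D`
of the first slice of `Γ`; each curve is the set of diagonals obtained from
`τ^{∓1}(D)` by a prescribed sequence of minimal clockwise (respectively
anticlockwise) rotations around alternating vertices of `Π`. -/
def curvesBase (d : Dg) : List (List Dg) :=
  if d = dg 1 3 Colour.P then c13
  else if d = dg 1 4 Colour.P then c14
  else if d = dg 1 5 Colour.R then c15
  else if d = dg 1 6 Colour.R then c16
  else if d = dg 5 1 Colour.B then c51
  else if d = dg 6 1 Colour.B then c61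
  else []

/-- `Y` lies on the `n`-th curve of `X`: curves of arbitrary vertices of `Γ`
are the `τ`-translates of the curves of the first-slice vertices. -/
def CurveMem (X : Dg) (n : ℕ) (Y : Dg) : Prop :=
  ∃ (k : ℕ) (b : Dg) (C : List Dg) (z : Dg),
    b ∈ firstSlice ∧ tau7^[k] b = X ∧ (curvesBase b)[n]? = some C ∧
      z ∈ C ∧ tau7^[k] z = Y

open Classical in
/-- `dim_k Ext¹_Π(X, Y)`: the number of curves of `X` on which `Y` lies. -/
noncomputable def extDim (X Y : Dg) : ℕ :=
  ((Finset.range 4).filter fun n => CurveMem X n Y).card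

/-- A cluster configuration: six pairwise distinct elements of `Π_{1,2,2}`
with vanishing `Ext¹_Π` between any two of them.  (Under the equivalence of
the mesh category of `Γ^7_{1,2,2}` with `C_{E₆}`, these correspond exactly to
the cluster tilting sets of the cluster category `C_{E₆}`.) -/
def IsConfig (T : Finset Dg) : Prop :=
  T.card = 6 ∧ (∀ d ∈ T, InPi d) ∧ ∀ x ∈ T, ∀ y ∈ T, extDim x y = 0

/-- `x` lies strictly inside the clockwise arc from `a` to `b`. -/
def inArc (a b x : ZMod 7) : Prop :=
  0 < (x - a).val ∧ (x - a).val < (b - a).val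

/-- Two coloured oriented diagonals cross if their underlying chords of `Π`
intersect in an interior point of `Π`. -/
def crosses (a b : Dg) : Prop :=
  (inArc a.i a.j b.i ∧ inArc a.j a.i b.j) ∨
  (inArc a.i a.j b.j ∧ inArc a.j a.i b.i)

/-- Long paired diagonals `[i,i+3]_P`. -/
def IsLongPaired (d : Dg) : Prop := d.c = Colour.P ∧ d.j - d.i = 3

/-- Short paired diagonals `[i,i+2]_P`. -/
def IsShortPaired (d : Dg) : Prop := d.c = Colour.P ∧ d.j - d.i = 2

/-- `D*` is a complement of `D` in the cluster configuration `T`: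
`D* ≠ D` and replacing `D` by `D*` in `T` again yields a cluster
configuration. -/
def IsComplement (T : Finset Dg) (D D' : Dg) : Prop :=
  D' ≠ D ∧ IsConfig (insert D' (T.erase D))

/-!
The translation `τ` has order 14 and preserves `Π_{1,2,2}` and `Ext`, so it acts on cluster
configurations, and every triple (long diagonal, its two quadrilateral diagonals) in the statement
is a `τ`-translate of `([1,5]_R, [1,6]_R, [5,7]_B)` (the blue triples need seven more steps than
the red ones, as `τ⁷ = ρ`). For that base triple the claim is a finite computation: every diagonal
Ext-orthogonal to `[1,5]_R` is either `[1,6]_R` or `[5,7]_B` (which have nonzero Ext with each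
other) or lies in a list of 14 diagonals, all orthogonal to both `[1,6]_R` and `[5,7]_B`, among
which no five are pairwise orthogonal. So a configuration containing `[1,5]_R` contains exactly one
of the two, and either may replace the other.
-/

set_option maxRecDepth 10000

instance : Fintype Colour :=
  ⟨⟨{Colour.R, Colour.B, Colour.P}, by decide⟩, fun c => by cases c <;> decide⟩

instance : Fintype Dg :=
  Fintype.ofEquiv (ZMod 7 × ZMod 7 × Colour)
    ⟨fun p => ⟨p.1, p.2.1, p.2.2⟩, fun d => (d.i, d.j, d.c), fun _ => rfl, fun _ => rfl⟩

instance : DecidablePred InPi := fun d => by unfold InPi; infer_instance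

theorem tau7_iterate_fourteen (d : Dg) : tau7^[14] d = d := by
  revert d; decide

theorem tau7_injective : Function.Injective tau7 :=
  Function.LeftInverse.injective (g := tau7^[13]) fun d => by
    rw [← Function.iterate_succ_apply, tau7_iterate_fourteen]

theorem inPi_tau7_iff (d : Dg) : InPi (tau7 d) ↔ InPi d := by
  revert d; decide

/-- `CurveMem` with the power of `τ` reduced modulo its order, as a Boolean test. -/
def curveMemB (X : Dg) (n : ℕ) (Y : Dg) : Bool :=
  (List.range 14).any fun k => firstSlice.any fun b =>
    tau7^[k] b == X && ((curvesBase b)[n]?.getD []).any fun z => tau7^[k] z == Y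

theorem curveMem_iff_curveMemB {X Y : Dg} {n : ℕ} : CurveMem X n Y ↔ curveMemB X n Y = true := by
  have hmod (k : ℕ) (d : Dg) : tau7^[k % 14] d = tau7^[k] d :=
    Function.IsPeriodicPt.iterate_mod_apply (tau7_iterate_fourteen d) k
  simp only [CurveMem, curveMemB, List.any_eq_true, List.mem_range, Bool.and_eq_true, beq_iff_eq]
  constructor
  · rintro ⟨k, b, C, z, hb, rfl, hC, hz, rfl⟩
    exact ⟨k % 14, Nat.mod_lt _ (by norm_num), b, hb, hmod k b, z, by simpa [hC] using hz, hmod k z⟩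
  · rintro ⟨k, -, b, hb, rfl, z, hz, rfl⟩
    cases hC : (curvesBase b)[n]? with
    | none => simp [hC] at hz
    | some C => exact ⟨k, b, C, z, hb, rfl, hC, by simpa [hC] using hz, rfl⟩

theorem extDim_eq_zero_iff {X Y : Dg} : extDim X Y = 0 ↔ ∀ n < 4, ¬ CurveMem X n Y := by
  simp [extDim, Finset.filter_eq_empty_iff]

instance (X Y : Dg) : Decidable (extDim X Y = 0) :=
  decidable_of_iff ((List.range 4).all fun n => !curveMemB X n Y) <| by
    simp [extDim_eq_zero_iff, curveMem_iff_curveMemB]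

theorem CurveMem.iterate {X Y : Dg} {n : ℕ} (h : CurveMem X n Y) (j : ℕ) :
    CurveMem (tau7^[j] X) n (tau7^[j] Y) := by
  obtain ⟨k, b, C, z, hb, rfl, hC, hz, rfl⟩ := h
  exact ⟨j + k, b, C, z, hb, Function.iterate_add_apply .., hC, hz, Function.iterate_add_apply ..⟩

theorem curveMem_tau7_iff {X Y : Dg} {n : ℕ} : CurveMem (tau7 X) n (tau7 Y) ↔ CurveMem X n Y := by
  refine ⟨fun h => ?_, fun h => h.iterate 1⟩
  simpa only [← Function.iterate_succ_apply, tau7_iterate_fourteen] using h.iterate 13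

theorem extDim_tau7 (X Y : Dg) : extDim (tau7 X) (tau7 Y) = extDim X Y := by
  unfold extDim
  congr 1
  ext n
  simp only [Finset.mem_filter, curveMem_tau7_iff]

structure IsSymmetry (f : Dg → Dg) : Prop where
  injective : Function.Injective f
  inPi_iff : ∀ d, InPi (f d) ↔ InPi d
  extDim_eq : ∀ X Y, extDim (f X) (f Y) = extDim X Y

namespace IsSymmetry

variable {f g : Dg → Dg}

theorem comp (hf : IsSymmetry f) (hg : IsSymmetry g) : IsSymmetry (f ∘ g) :=
  ⟨hf.injective.comp hg.injective, fun d => (hf.inPi_iff _).trans (hg.inPi_iff d),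
    fun X Y => (hf.extDim_eq _ _).trans (hg.extDim_eq X Y)⟩

theorem iterate (hf : IsSymmetry f) : ∀ j : ℕ, IsSymmetry f^[j]
  | 0 => ⟨Function.injective_id, fun _ => Iff.rfl, fun _ _ => rfl⟩
  | j + 1 => by rw [Function.iterate_succ]; exact (hf.iterate j).comp hf

theorem isConfig_image_iff (hf : IsSymmetry f) {T : Finset Dg} :
    IsConfig (T.image f) ↔ IsConfig T := by
  simp only [IsConfig, Finset.card_image_of_injective _ hf.injective, Finset.forall_mem_image,
    hf.inPi_iff, hf.extDim_eq]

theorem isComplement_image_iff (hf : IsSymmetry f) {T : Finset Dg} {D D' : Dg} :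
    IsComplement (T.image f) (f D) (f D') ↔ IsComplement T D D' := by
  rw [IsComplement, IsComplement, ← Finset.image_erase hf.injective, ← Finset.image_insert,
    hf.isConfig_image_iff, hf.injective.ne_iff]

end IsSymmetry

theorem isSymmetry_tau7 : IsSymmetry tau7 :=
  ⟨tau7_injective, inPi_tau7_iff, extDim_tau7⟩

def Exchangeable (T : Finset Dg) (X₁ X₂ : Dg) : Prop :=
  Xor (X₁ ∈ T) (X₂ ∈ T) ∧ (X₁ ∈ T → IsComplement T X₁ X₂) ∧ (X₂ ∈ T → IsComplement T X₂ X₁)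

theorem IsSymmetry.exchangeable_image_iff {f : Dg → Dg} (hf : IsSymmetry f) {T : Finset Dg}
    {X₁ X₂ : Dg} : Exchangeable (T.image f) (f X₁) (f X₂) ↔ Exchangeable T X₁ X₂ := by
  simp only [Exchangeable, hf.injective.mem_finset_image, hf.isComplement_image_iff]

theorem IsConfig.isComplement_of_orthogonal {T : Finset Dg} {D D' : Dg} (hT : IsConfig T)
    (hD : D ∈ T) (hD' : D' ∉ T) (hPi : InPi D') (hself : extDim D' D' = 0)
    (horth : ∀ t ∈ T, t ≠ D → extDim D' t = 0 ∧ extDim t D' = 0) : IsComplement T D D' := by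
  obtain ⟨hcard, hPiT, hext⟩ := hT
  refine ⟨fun h => hD' (h ▸ hD), ?_, ?_, ?_⟩
  · rw [Finset.card_insert_of_notMem (fun h => hD' (Finset.mem_of_mem_erase h)),
      Finset.card_erase_of_mem hD, hcard]
  · simp only [Finset.mem_insert, Finset.mem_erase]
    rintro d (rfl | ⟨-, hd⟩)
    exacts [hPi, hPiT d hd]
  · simp only [Finset.mem_insert, Finset.mem_erase]
    rintro x (rfl | ⟨hx, hxT⟩) y (rfl | ⟨hy, hyT⟩)
    exacts [hself, (horth y hyT hy).1, (horth x hxT hx).2, hext x hxT y hyT]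

theorem exists_mem_sublistsLen_of_subset_toFinset {α : Type*} [DecidableEq α] {l : List α}
    (hl : l.Nodup) {s : Finset α} (hs : s ⊆ l.toFinset) :
    ∃ l' ∈ l.sublistsLen s.card, ∀ x, x ∈ l' ↔ x ∈ s := by
  have hmem (x : α) : x ∈ l.filter (· ∈ s) ↔ x ∈ s := by
    simp only [List.mem_filter, decide_eq_true_eq, and_iff_right_iff_imp]
    exact fun h => List.mem_toFinset.mp (hs h)
  refine ⟨l.filter (· ∈ s), List.mem_sublistsLen.mpr ⟨List.filter_sublist, ?_⟩, hmem⟩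
  rw [← List.toFinset_card_of_nodup (hl.filter _)]
  congr 1
  ext x
  simp only [List.mem_toFinset, hmem]

section

open Colour

/-- The diagonals of `Π_{1,2,2}`, other than `[1,5]_R`, `[1,6]_R` and `[5,7]_B`, that are
Ext-orthogonal to `[1,5]_R`. -/
def baseOrthogonals : List Dg :=
  [dg 0 2 B, dg 0 4 R, dg 0 5 R, dg 1 3 P, dg 1 4 P, dg 2 4 P, dg 2 5 P, dg 3 1 R,
    dg 3 5 B, dg 3 5 P, dg 5 1 B, dg 6 1 B, dg 6 2 B, dg 6 4 R]

/-- Pairs with nonzero Ext covering every five-element sublist of `baseOrthogonals`. -/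
def baseObstructions : List (Dg × Dg) :=
  [(dg 0 2 B, dg 1 3 P), (dg 0 2 B, dg 1 4 P), (dg 0 2 B, dg 5 1 B),
    (dg 0 2 B, dg 6 1 B), (dg 0 4 R, dg 2 5 P), (dg 0 4 R, dg 3 1 R),
    (dg 0 4 R, dg 3 5 P), (dg 0 4 R, dg 5 1 B), (dg 0 4 R, dg 6 1 B),
    (dg 0 4 R, dg 6 2 B), (dg 0 5 R, dg 3 1 R), (dg 0 5 R, dg 6 1 B),
    (dg 0 5 R, dg 6 2 B), (dg 0 5 R, dg 6 4 R), (dg 1 3 P, dg 2 4 P),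
    (dg 1 3 P, dg 2 5 P), (dg 1 3 P, dg 6 2 B), (dg 1 4 P, dg 2 5 P),
    (dg 1 4 P, dg 3 1 R), (dg 1 4 P, dg 3 5 B), (dg 1 4 P, dg 3 5 P),
    (dg 1 4 P, dg 6 2 B), (dg 2 4 P, dg 3 1 R), (dg 2 4 P, dg 3 5 B),
    (dg 2 4 P, dg 3 5 P), (dg 2 5 P, dg 3 1 R), (dg 2 5 P, dg 3 5 B),
    (dg 2 5 P, dg 6 4 R), (dg 3 1 R, dg 5 1 B), (dg 3 5 B, dg 5 1 B),
    (dg 3 5 B, dg 6 1 B), (dg 3 5 B, dg 6 2 B), (dg 3 5 P, dg 6 4 R),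
    (dg 5 1 B, dg 6 2 B), (dg 5 1 B, dg 6 4 R)]

theorem extDim_base_eq_zero_cases {t : Dg} (ht : InPi t) (h : extDim (dg 1 5 R) t = 0) :
    t = dg 1 5 R ∨ t = dg 1 6 R ∨ t = dg 5 7 B ∨ t ∈ baseOrthogonals := by
  revert t; decide

theorem orthogonal_quadrilateral_of_extDim_base_eq_zero {t : Dg} (ht : InPi t)
    (h : extDim (dg 1 5 R) t = 0) (h₁ : t ≠ dg 1 6 R) (h₂ : t ≠ dg 5 7 B) :
    (extDim (dg 1 6 R) t = 0 ∧ extDim t (dg 1 6 R) = 0) ∧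
      (extDim (dg 5 7 B) t = 0 ∧ extDim t (dg 5 7 B) = 0) := by
  revert t; decide

theorem extDim_quadrilateral_ne_zero : extDim (dg 1 6 R) (dg 5 7 B) ≠ 0 := by
  decide

theorem exists_extDim_ne_zero_of_subset_baseOrthogonals {s : Finset Dg}
    (hs : s ⊆ baseOrthogonals.toFinset) (hcard : s.card = 5) :
    ∃ x ∈ s, ∃ y ∈ s, extDim x y ≠ 0 := by
  have hobstructions : baseObstructions.all (fun p => decide (extDim p.1 p.2 ≠ 0)) = true := by
    decide
  have hcover : (baseOrthogonals.sublistsLen 5).all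
      (fun l => baseObstructions.any fun p => l.contains p.1 && l.contains p.2) = true := by
    decide
  obtain ⟨l, hl, hls⟩ := exists_mem_sublistsLen_of_subset_toFinset (by decide) hs
  rw [hcard] at hl
  obtain ⟨p, hp, h⟩ := List.any_eq_true.mp (List.all_eq_true.mp hcover l hl)
  simp only [Bool.and_eq_true, List.contains_iff_mem, hls] at h
  exact ⟨p.1, h.1, p.2, h.2, of_decide_eq_true (List.all_eq_true.mp hobstructions p hp)⟩

theorem quadrilateral_mem_of_base_mem {T : Finset Dg} (hT : IsConfig T) (hL : dg 1 5 R ∈ T) :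
    dg 1 6 R ∈ T ∨ dg 5 7 B ∈ T := by
  obtain ⟨hcard, hPi, hext⟩ := hT
  by_contra! h
  have hs : T.erase (dg 1 5 R) ⊆ baseOrthogonals.toFinset := by
    intro t ht
    obtain ⟨hne, htT⟩ := Finset.mem_erase.mp ht
    rcases extDim_base_eq_zero_cases (hPi t htT) (hext _ hL _ htT) with rfl | rfl | rfl | h'
    exacts [absurd rfl hne, absurd htT h.1, absurd htT h.2, List.mem_toFinset.mpr h']
  obtain ⟨x, hx, y, hy, hxy⟩ := exists_extDim_ne_zero_of_subset_baseOrthogonals hs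
    (by rw [Finset.card_erase_of_mem hL, hcard])
  exact hxy (hext x (Finset.mem_of_mem_erase hx) y (Finset.mem_of_mem_erase hy))

theorem exchangeable_base {T : Finset Dg} (hT : IsConfig T) (hL : dg 1 5 R ∈ T) :
    Exchangeable T (dg 1 6 R) (dg 5 7 B) := by
  have not_both : ¬ (dg 1 6 R ∈ T ∧ dg 5 7 B ∈ T) := fun h =>
    extDim_quadrilateral_ne_zero (hT.2.2 _ h.1 _ h.2)
  have horth {t : Dg} (ht : t ∈ T) :=
    orthogonal_quadrilateral_of_extDim_base_eq_zero (hT.2.1 t ht) (hT.2.2 _ hL _ ht)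
  refine ⟨(xor_iff_or_and_not_and _ _).mpr ⟨quadrilateral_mem_of_base_mem hT hL, not_both⟩,
    fun h₁ => ?_, fun h₂ => ?_⟩
  · have h₂ : dg 5 7 B ∉ T := fun h₂ => not_both ⟨h₁, h₂⟩
    exact hT.isComplement_of_orthogonal h₁ h₂ (by decide) (by decide) fun t ht hne =>
      (horth ht hne (ne_of_mem_of_not_mem ht h₂)).2
  · have h₁ : dg 1 6 R ∉ T := fun h₁ => not_both ⟨h₁, h₂⟩
    exact hT.isComplement_of_orthogonal h₂ h₁ (by decide) (by decide) fun t ht hne =>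
      (horth ht (ne_of_mem_of_not_mem ht h₁) hne).1

theorem exchangeable_of_tau7_iterate {T : Finset Dg} (hT : IsConfig T) {L X₁ X₂ : Dg} (j : ℕ)
    (hL : tau7^[j] L = dg 1 5 R) (h₁ : tau7^[j] X₁ = dg 1 6 R)
    (h₂ : tau7^[j] X₂ = dg 5 7 B) (hLT : L ∈ T) : Exchangeable T X₁ X₂ := by
  have hτ := isSymmetry_tau7.iterate j
  rw [← hτ.exchangeable_image_iff, h₁, h₂]
  exact exchangeable_base (hτ.isConfig_image_iff.mpr hT) (hL ▸ Finset.mem_image_of_mem _ hLT)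

theorem tau7_iterate_long_red {i : ZMod 7} (hi : i ≠ 1) :
    tau7^[(i - 1).val] ⟨i, i + 4, R⟩ = dg 1 5 R ∧
      tau7^[(i - 1).val] ⟨i, i + 5, R⟩ = dg 1 6 R ∧
      tau7^[(i - 1).val] ⟨i + 6, i + 4, R⟩ = dg 5 7 B := by
  revert i; decide

theorem tau7_iterate_long_blue {i : ZMod 7} (hi : i ≠ 1) :
    tau7^[(i - 1).val + 7] ⟨i + 4, i, B⟩ = dg 1 5 R ∧
      tau7^[(i - 1).val + 7] ⟨i + 5, i, B⟩ = dg 1 6 R ∧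
      tau7^[(i - 1).val + 7] ⟨i + 4, i + 6, B⟩ = dg 5 7 B := by
  revert i; decide

end

/-- Lemma 5.10.  Let `i ∈ ℤ/7`, let `L = [i,i+4]_R` be a
long single red diagonal of the heptagon `Π`, and let `T` be a cluster
configuration containing `L`.  If `i ≠ 1`, then exactly one of the two
diagonals `[i,i+5]_R` and `[i+6,i+4]_R` (the red single diagonals
triangulating the quadrilateral `Π₄` cut off by `L`) belongs to `T`; if
`i = 1`, then exactly one of `[1,6]_R` and `[5,7]_B = ρ([7,5]_R)` belongs to
`T`.  In each case the two listed diagonals are complements of each other.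
The analogous statement holds for blue long single diagonals
`ρ(L) = [i+4,i]_B`. -/
theorem long_single_forces_quadrilateral_diagonal (i : ZMod 7) (T : Finset Dg)
    (hT : IsConfig T) :
    ((⟨i, i + 4, Colour.R⟩ : Dg) ∈ T →
      (i ≠ 1 →
        Xor' ((⟨i, i + 5, Colour.R⟩ : Dg) ∈ T)
             ((⟨i + 6, i + 4, Colour.R⟩ : Dg) ∈ T) ∧
        ((⟨i, i + 5, Colour.R⟩ : Dg) ∈ T →
          IsComplement T ⟨i, i + 5, Colour.R⟩ ⟨i + 6, i + 4, Colour.R⟩) ∧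
        ((⟨i + 6, i + 4, Colour.R⟩ : Dg) ∈ T →
          IsComplement T ⟨i + 6, i + 4, Colour.R⟩ ⟨i, i + 5, Colour.R⟩)) ∧
      (i = 1 →
        Xor' ((dg 1 6 Colour.R) ∈ T) ((dg 5 7 Colour.B) ∈ T) ∧
        ((dg 1 6 Colour.R) ∈ T →
          IsComplement T (dg 1 6 Colour.R) (dg 5 7 Colour.B)) ∧
        ((dg 5 7 Colour.B) ∈ T →
          IsComplement T (dg 5 7 Colour.B) (dg 1 6 Colour.R)))) ∧
    ((⟨i + 4, i, Colour.B⟩ : Dg) ∈ T →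
      (i ≠ 1 →
        Xor' ((⟨i + 5, i, Colour.B⟩ : Dg) ∈ T)
             ((⟨i + 4, i + 6, Colour.B⟩ : Dg) ∈ T) ∧
        ((⟨i + 5, i, Colour.B⟩ : Dg) ∈ T →
          IsComplement T ⟨i + 5, i, Colour.B⟩ ⟨i + 4, i + 6, Colour.B⟩) ∧
        ((⟨i + 4, i + 6, Colour.B⟩ : Dg) ∈ T →
          IsComplement T ⟨i + 4, i + 6, Colour.B⟩ ⟨i + 5, i, Colour.B⟩)) ∧
      (i = 1 →
        Xor' ((dg 6 1 Colour.B) ∈ T) ((dg 7 5 Colour.R) ∈ T) ∧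
        ((dg 6 1 Colour.B) ∈ T →
          IsComplement T (dg 6 1 Colour.B) (dg 7 5 Colour.R)) ∧
        ((dg 7 5 Colour.R) ∈ T →
          IsComplement T (dg 7 5 Colour.R) (dg 6 1 Colour.B)))) := by
  refine ⟨fun hL => ⟨fun hi => ?_, fun hi => ?_⟩, fun hL => ⟨fun hi => ?_, fun hi => ?_⟩⟩
  · obtain ⟨h₀, h₁, h₂⟩ := tau7_iterate_long_red hi
    exact exchangeable_of_tau7_iterate hT _ h₀ h₁ h₂ hL
  · subst hi
    exact exchangeable_of_tau7_iterate hT 0 (by decide) rfl rfl hL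
  · obtain ⟨h₀, h₁, h₂⟩ := tau7_iterate_long_blue hi
    exact exchangeable_of_tau7_iterate hT _ h₀ h₁ h₂ hL
  · subst hi
    exact exchangeable_of_tau7_iterate hT 7 (by decide) (by decide) (by decide) hL
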